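/- Let I be an ideal on ω and J be an analytic ideal on ω. Then the Fubini product I ⊗ J is Egorov if and only if both I and J are Egorov. -/

import Mathlib

open MeasureTheory Set

/-- An ideal on a (countable) set `X`. -/
def IsIdeal {X : Type} (I : Set (Set X)) : Prop :=
  (∀ A B : Set X, A ∈ I → B ∈ I → A ∪ B ∈ I) ∧
  (∀ A B : Set X, A ⊆ B → B ∈ I → A ∈ I) ∧
  (∀ A : Set X, A.Finite → A ∈ I) ∧
  (Set.univ : Set X) ∉ I

/-- `I`-pointwise convergence on `[0,1]` of a family of functions. -/
def IConvPtwise {X : Type} (I : Set (Set X)) (f : X → ℝ → ℝ) (g : ℝ → ℝ) : Prop :=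
  ∀ t ∈ Icc (0:ℝ) 1, ∀ ε : ℝ, 0 < ε → {a : X | ε ≤ |f a t - g t|} ∈ I

/-- `I`-uniform convergence on `M` of a family of functions. -/
def IConvUnif {X : Type} (I : Set (Set X)) (f : X → ℝ → ℝ) (g : ℝ → ℝ) (M : Set ℝ) : Prop :=
  ∀ ε : ℝ, 0 < ε → {a : X | ∃ t ∈ M, ε ≤ |f a t - g t|} ∈ I

/-- `I` is an Egorov ideal. -/
def IsEgorov {X : Type} (I : Set (Set X)) : Prop :=
  ∀ (f : X → ℝ → ℝ) (g : ℝ → ℝ),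
    (∀ a : X, AEMeasurable (f a) (volume.restrict (Icc (0:ℝ) 1))) →
    AEMeasurable g (volume.restrict (Icc (0:ℝ) 1)) →
    IConvPtwise I f g →
    ∀ η : ℝ, 0 < η →
      ∃ M : Set ℝ, M ⊆ Icc (0:ℝ) 1 ∧ NullMeasurableSet M volume ∧
        volume (Icc (0:ℝ) 1 \ M) < ENNReal.ofReal η ∧
        IConvUnif I f g M

def IsSubmeasure (φ : Set ℕ → ENNReal) : Prop :=
  φ ∅ = 0 ∧ (∀ n : ℕ, φ {n} < ⊤) ∧
  ∀ A B : Set ℕ, φ A ≤ φ (A ∪ B) ∧ φ (A ∪ B) ≤ φ A + φ B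

def IsLscSubmeasure (φ : Set ℕ → ENNReal) : Prop :=
  ∀ A : Set ℕ, φ A = ⨆ n : ℕ, φ (A ∩ Iio n)

def IsNonpathological (φ : Set ℕ → ENNReal) : Prop :=
  ∀ A : Set ℕ, φ A = ⨆ (μ : Measure ℕ) (_ : ∀ B : Set ℕ, μ B ≤ φ B), μ A

/-- `I` is a non-pathological Σ⁰₂ ideal: `I = Fin(φ)` for some non-pathological
lsc submeasure `φ` with `φ(ω) = ∞`. -/
def IsNonpathSigma2 (I : Set (Set ℕ)) : Prop :=
  ∃ φ : Set ℕ → ENNReal, IsSubmeasure φ ∧ IsLscSubmeasure φ ∧ IsNonpathological φ ∧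
    φ Set.univ = ⊤ ∧ I = {A : Set ℕ | φ A < ⊤}

def IdealCountablyGenerated {X : Type} (I : Set (Set X)) : Prop :=
  ∃ B : Set (Set X), B.Countable ∧ B ⊆ I ∧
    ∀ A ∈ I, ∃ F : Set (Set X), F ⊆ B ∧ F.Finite ∧ A ⊆ ⋃₀ F

def IdealIso {X Y : Type} (I : Set (Set X)) (J : Set (Set Y)) : Prop :=
  ∃ f : Y → X, Function.Bijective f ∧ ∀ A : Set X, (A ∈ I ↔ f ⁻¹' A ∈ J)

def RKle {X Y : Type} (I : Set (Set X)) (J : Set (Set Y)) : Prop :=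
  ∃ f : Y → X, ∀ A : Set X, (A ∈ I ↔ f ⁻¹' A ∈ J)

def RBle {X Y : Type} (I : Set (Set X)) (J : Set (Set Y)) : Prop :=
  ∃ f : Y → X, (∀ x : X, (f ⁻¹' {x}).Finite) ∧ ∀ A : Set X, (A ∈ I ↔ f ⁻¹' A ∈ J)

/-- The restriction `I↾A` of an ideal, as an ideal on the subtype `↥A`. -/
def restrictIdeal {X : Type} (I : Set (Set X)) (A : Set X) : Set (Set ↥A) :=
  {S : Set ↥A | (Subtype.val '' S) ∈ I}

def IsTall {X : Type} (I : Set (Set X)) : Prop :=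
  ∀ A : Set X, A.Infinite → ∃ B ∈ I, B.Infinite ∧ B ⊆ A

/-- The `J`-sum `∑^J_{n∈ω} I_n` on `ω²`: sets whose `I_n`-positive sections form a `J`-set. -/
def idealSumOver (J : Set (Set ℕ)) (I : ℕ → Set (Set ℕ)) : Set (Set (ℕ × ℕ)) :=
  {M : Set (ℕ × ℕ) | {n : ℕ | {k : ℕ | (n, k) ∈ M} ∉ I n} ∈ J}

/-- The identification of `P(X)` with the Cantor space `2^X`. -/
def idealChar {X : Type} (I : Set (Set X)) : Set (X → Bool) :=
  {x : X → Bool | {a : X | x a = true} ∈ I}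

/-- An ideal on `ω` is analytic if it is an analytic subset of the Cantor space `2^ω`. -/
def IsAnalyticIdeal (I : Set (Set ℕ)) : Prop := MeasureTheory.AnalyticSet (idealChar I)

/-- The Fubini product `I ⊗ J` on `ω²`. -/
def fubiniProd (I J : Set (Set ℕ)) : Set (Set (ℕ × ℕ)) :=
  {M : Set (ℕ × ℕ) | {n : ℕ | {k : ℕ | (n, k) ∈ M} ∉ J} ∈ I}

/-!
The projections `ω² → ω` witness that `I` and `J` are Katětov–Rudin below `I ⊗ J`, and the Egorov
property passes down that order.

Conversely, given `f : ω² → ℝ → ℝ` converging to `g` along `I ⊗ J`, let `w n t` be the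
`J`-limit superior of `min |f (n, k) t - g t| 1` over `k`. Then `w` converges to `0` along `I`,
and on each row `n` the excess `(min |f (n, k) - g| 1 - w n)⁺` converges to `0` along `J`. The
Egorov property of `I` for `w` and of `J` for each row give sets `M₀` and `N n`; on
`M₀ ∩ ⋂ n, N n` the convergence of `f` is uniform along `I ⊗ J`.

Analyticity of `J` is needed to make `w n` measurable: the set of `t` at which a given level is
`J`-small on row `n` is the preimage of the analytic set `J` under a measurable map, and analytic
sets are null-measurable (Lusin: `range f` is approximated from inside by the closed sets
`⋂ n, closure (f '' {x | ∀ i < n, x i ≤ σ i})`).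
-/

open Filter Topology
open scoped ENNReal

def boundedCylinder (s : ℕ → ℕ) (n : ℕ) : Set (ℕ → ℕ) := {x | ∀ i < n, x i ≤ s i}

lemma boundedCylinder_zero (s : ℕ → ℕ) : boundedCylinder s 0 = univ := by
  simp [boundedCylinder]

lemma boundedCylinder_antitone (s : ℕ → ℕ) : Antitone (boundedCylinder s) :=
  fun _ _ hnm _ hx i hi => hx i (hi.trans_le hnm)

lemma boundedCylinder_congr {s s' : ℕ → ℕ} {n : ℕ} (h : ∀ i < n, s i = s' i) :
    boundedCylinder s n = boundedCylinder s' n := by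
  ext x
  exact forall₂_congr fun i hi => by rw [h i hi]

lemma monotone_boundedCylinder_update (s : ℕ → ℕ) (n : ℕ) :
    Monotone fun m => boundedCylinder (Function.update s n m) (n + 1) := by
  intro m m' hm x hx i hi
  have hxi := hx i hi
  rcases eq_or_ne i n with rfl | hin
  · rw [Function.update_self] at hxi ⊢
    exact hxi.trans hm
  · rwa [Function.update_of_ne hin] at hxi ⊢

lemma iUnion_boundedCylinder_update (s : ℕ → ℕ) (n : ℕ) :
    ⋃ m, boundedCylinder (Function.update s n m) (n + 1) = boundedCylinder s n := by
  ext x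
  simp only [mem_iUnion, boundedCylinder, mem_ofPred_eq]
  constructor
  · rintro ⟨m, hx⟩ i hi
    simpa [hi.ne] using hx i (hi.trans n.lt_succ_self)
  · intro hx
    refine ⟨x n, fun i hi => ?_⟩
    rcases eq_or_ne i n with rfl | hin
    · simp
    · simpa [hin] using hx i (by omega)

lemma iInter_closure_image_boundedCylinder_subset_range {X : Type*} [TopologicalSpace X]
    [T2Space X] [FirstCountableTopology X] {f : (ℕ → ℕ) → X} (hf : Continuous f)
    (σ : ℕ → ℕ) : ⋂ n, closure (f '' boundedCylinder σ n) ⊆ range f := by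
  intro y hy
  obtain ⟨U, hU⟩ := (𝓝 y).exists_antitone_basis
  have : ∀ n, ∃ x ∈ boundedCylinder σ n, f x ∈ U n := fun n => by
    obtain ⟨_, hyU, x, hx, rfl⟩ := mem_closure_iff_nhds.1 (mem_iInter.1 hy n) (U n) (hU.mem n)
    exact ⟨x, hx, hyU⟩
  choose x hxσ hxU using this
  -- Coordinate `i` of `x n` is bounded by `σ i` if `i < n`, and by one of the finitely many
  -- values `x 0 i, …, x i i` otherwise.
  let b : ℕ → ℕ := fun i => σ i + ∑ n ∈ Finset.range (i + 1), x n i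
  have hxb : ∀ n, x n ∈ univ.pi fun i => Iic (b i) := by
    intro n i _
    rcases lt_or_ge i n with hin | hni
    · exact (hxσ n i hin).trans (Nat.le_add_right _ _)
    · exact (Finset.single_le_sum (f := fun n => x n i) (fun _ _ => Nat.zero_le _)
        (Finset.mem_range.2 (Nat.lt_succ_of_le hni))).trans (Nat.le_add_left _ _)
  obtain ⟨a, -, φ, hφ, ha⟩ :=
    (isCompact_univ_pi fun i => (finite_Iic (b i)).isCompact).tendsto_subseq hxb
  exact ⟨a, tendsto_nhds_unique ((hf.tendsto a).comp ha)
    ((hU.tendsto hxU).comp hφ.tendsto_atTop)⟩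

section AnalyticSet

variable {X : Type*} [MeasurableSpace X] (μ : Measure X) [IsFiniteMeasure μ]

lemma exists_measure_image_boundedCylinder_update (f : (ℕ → ℕ) → X) (s : ℕ → ℕ) (n : ℕ)
    {δ : ℝ≥0∞} (hδ : δ ≠ 0) :
    ∃ m, μ (f '' boundedCylinder s n) ≤
      μ (f '' boundedCylinder (Function.update s n m) (n + 1)) + δ := by
  have hsup : μ (f '' boundedCylinder s n) + δ =
      ⨆ m, μ (f '' boundedCylinder (Function.update s n m) (n + 1)) + δ := by
    rw [← ENNReal.iSup_add, ← Monotone.measure_iUnion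
      fun _ _ h => image_mono (monotone_boundedCylinder_update s n h), ← image_iUnion,
      iUnion_boundedCylinder_update]
  obtain ⟨m, hm⟩ := lt_iSup_iff.1 (hsup ▸ ENNReal.lt_add_right (measure_ne_top μ _) hδ)
  exact ⟨m, hm.le⟩

lemma exists_measure_range_le_image_boundedCylinder (f : (ℕ → ℕ) → X) {δ : ℕ → ℝ≥0∞}
    (hδ : ∀ n, δ n ≠ 0) :
    ∃ σ : ℕ → ℕ, ∀ n, μ (range f) ≤
      μ (f '' boundedCylinder σ n) + ∑ i ∈ Finset.range n, δ i := by
  choose m hm using fun s n => exists_measure_image_boundedCylinder_update μ f s n (hδ n)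
  -- `S n` holds the bounds chosen in the first `n` steps.
  let S : ℕ → ℕ → ℕ := fun n =>
    Nat.rec (motive := fun _ => ℕ → ℕ) 0 (fun n s => Function.update s n (m s n)) n
  have hS : ∀ n i, i < n → S n i = S (i + 1) i := by
    intro n i hi
    induction n with
    | zero => omega
    | succ n ih =>
      rcases Nat.lt_succ_iff_lt_or_eq.1 hi with hi | rfl
      · rw [← ih hi]
        exact Function.update_of_ne hi.ne _ _
      · rfl
  refine ⟨fun i => S (i + 1) i, fun n => ?_⟩
  rw [← boundedCylinder_congr (hS n)]
  induction n with
  | zero => simp [boundedCylinder_zero]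
  | succ n ih =>
    calc μ (range f) ≤ μ (f '' boundedCylinder (S n) n) + ∑ i ∈ Finset.range n, δ i := ih
      _ ≤ μ (f '' boundedCylinder (S (n + 1)) (n + 1)) + δ n + ∑ i ∈ Finset.range n, δ i := by
        gcongr; exact hm (S n) n
      _ = _ := by rw [Finset.sum_range_succ]; ring

variable [TopologicalSpace X] [OpensMeasurableSpace X] [T2Space X] [FirstCountableTopology X]

lemma exists_isClosed_subset_range_measure_le {f : (ℕ → ℕ) → X} (hf : Continuous f)
    {ε : ℝ≥0∞} (hε : ε ≠ 0) : ∃ K ⊆ range f, IsClosed K ∧ μ (range f) ≤ μ K + ε := by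
  obtain ⟨δ, hδ, hδε⟩ := ENNReal.exists_pos_sum_of_countable' hε ℕ
  obtain ⟨σ, hσ⟩ := exists_measure_range_le_image_boundedCylinder μ f fun n => (hδ n).ne'
  refine ⟨_, iInter_closure_image_boundedCylinder_subset_range hf σ,
    isClosed_iInter fun _ => isClosed_closure, ?_⟩
  rw [Antitone.measure_iInter
      (fun _ _ h => closure_mono (image_mono (boundedCylinder_antitone σ h)))
      (fun _ => isClosed_closure.measurableSet.nullMeasurableSet) ⟨0, measure_ne_top μ _⟩,
    ENNReal.iInf_add]
  exact le_iInf fun n => (hσ n).trans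
    (add_le_add (measure_mono subset_closure) ((ENNReal.sum_le_tsum _).trans hδε.le))

theorem MeasureTheory.AnalyticSet.nullMeasurableSet {s : Set X} (hs : AnalyticSet s) :
    NullMeasurableSet s μ := by
  rw [AnalyticSet] at hs
  rcases hs with rfl | ⟨f, hf, rfl⟩
  · exact nullMeasurableSet_empty
  choose K hKf hK hμK using fun j : ℕ =>
    exists_isClosed_subset_range_measure_le μ hf (ε := (j + 1 : ℝ≥0∞)⁻¹) (by simp)
  have hle : μ (range f) ≤ μ (⋃ j, K j) := by
    refine ENNReal.le_of_forall_pos_le_add fun δ hδ _ => ?_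
    obtain ⟨j, hj⟩ := ENNReal.exists_inv_nat_lt (a := δ) (by simpa using hδ.ne')
    refine (hμK j).trans (add_le_add (measure_mono (subset_iUnion K j)) ?_)
    exact (ENNReal.inv_le_inv.2 (by simp)).trans hj.le
  have hKm : MeasurableSet (⋃ j, K j) := .iUnion fun j => (hK j).measurableSet
  exact hKm.nullMeasurableSet.congr
    (ae_eq_of_subset_of_measure_ge (iUnion_subset hKf) hle hKm.nullMeasurableSet
      (measure_ne_top μ _))

end AnalyticSet

theorem MeasureTheory.AnalyticSet.preimage_of_measurable {X Y : Type*} [t : TopologicalSpace X]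
    [PolishSpace X] [MeasurableSpace X] [BorelSpace X] [TopologicalSpace Y] [T2Space Y]
    [SecondCountableTopology Y] [MeasurableSpace Y] [OpensMeasurableSpace Y] {s : Set Y}
    (hs : AnalyticSet s) {f : X → Y} (hf : Measurable f) : AnalyticSet (f ⁻¹' s) := by
  obtain ⟨t', t't, hft', ht'⟩ := hf.exists_continuous
  have := @AnalyticSet.preimage X Y t' _ ht' _ s hs f hft'
  simpa using @AnalyticSet.image_of_continuous X t' X t _ this id (continuous_id_of_le t't)

theorem nullMeasurableSet_setOf_mem_of_isAnalyticIdeal {X : Type*} [TopologicalSpace X]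
    [PolishSpace X] [MeasurableSpace X] [BorelSpace X] {J : Set (Set ℕ)}
    (hJ : IsAnalyticIdeal J) (μ : Measure X) [IsFiniteMeasure μ] {S : ℕ → Set X}
    (hS : ∀ k, NullMeasurableSet (S k) μ) : NullMeasurableSet {t | {k | t ∈ S k} ∈ J} μ := by
  classical
  let Φ : X → ℕ → Bool := fun t k => decide (t ∈ toMeasurable μ (S k))
  have hΦ : Measurable Φ := measurable_pi_lambda _ fun k =>
    measurable_to_bool (by
      convert measurableSet_toMeasurable μ (S k)
      ext; simp [Φ])
  refine ((hJ.preimage_of_measurable hΦ).nullMeasurableSet μ).congr ?_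
  filter_upwards [ae_all_iff.2 fun k => eventuallyEq_set.1 (hS k).toMeasurable_ae_eq] with t ht
  change ({k | Φ t k = true} ∈ J) = ({k | t ∈ S k} ∈ J)
  simp only [Φ, decide_eq_true_eq, ht]

lemma IsIdeal.mono {X : Type} {I : Set (Set X)} (hI : IsIdeal I) {A B : Set X} (hAB : A ⊆ B)
    (hB : B ∈ I) : A ∈ I :=
  hI.2.1 A B hAB hB

lemma IsIdeal.empty_mem {X : Type} {I : Set (Set X)} (hI : IsIdeal I) : ∅ ∈ I :=
  hI.2.2.1 ∅ finite_empty

lemma IsIdeal.univ_notMem {X : Type} {I : Set (Set X)} (hI : IsIdeal I) : univ ∉ I :=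
  hI.2.2.2

open Classical in
/-- The `J`-limit superior of `min |x k| 1`, computed along positive rationals. -/
noncomputable def idealDeviation (J : Set (Set ℕ)) (x : ℕ → ℝ) : ℝ :=
  ⨅ q : ℚ, if 0 < q ∧ {k | (q : ℝ) ≤ |x k|} ∈ J then (q : ℝ) else 1

section idealDeviation

open Classical

variable (J : Set (Set ℕ)) (x : ℕ → ℝ)

lemma zero_mem_lowerBounds_idealDeviation :
    0 ∈ lowerBounds (range fun q : ℚ =>
      if 0 < q ∧ {k | (q : ℝ) ≤ |x k|} ∈ J then (q : ℝ) else 1) := by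
  rintro _ ⟨q, rfl⟩
  dsimp only
  split_ifs with h
  · exact_mod_cast h.1.le
  · exact zero_le_one

lemma idealDeviation_nonneg : 0 ≤ idealDeviation J x :=
  le_ciInf fun q => zero_mem_lowerBounds_idealDeviation J x ⟨q, rfl⟩

variable {J x}

lemma idealDeviation_le {q : ℚ} (hq : 0 < q) (hqx : {k | (q : ℝ) ≤ |x k|} ∈ J) :
    idealDeviation J x ≤ q :=
  (ciInf_le ⟨0, zero_mem_lowerBounds_idealDeviation J x⟩ q).trans_eq (if_pos ⟨hq, hqx⟩)

lemma exists_rat_lt_of_idealDeviation_lt {c : ℝ} (hc : idealDeviation J x < c) (hc1 : c ≤ 1) :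
    ∃ q : ℚ, (q : ℝ) < c ∧ {k | (q : ℝ) ≤ |x k|} ∈ J := by
  obtain ⟨q, hq⟩ := exists_lt_of_ciInf_lt hc
  split_ifs at hq with h
  · exact ⟨q, hq, h.2⟩
  · exact absurd hc1 hq.not_ge

lemma setOf_le_posPart_sub_idealDeviation_mem (hJ : IsIdeal J) {δ : ℝ}
    (hδ : 0 < δ) : {k | δ ≤ max (min |x k| 1 - idealDeviation J x) 0} ∈ J := by
  rcases le_or_gt (idealDeviation J x + δ) 1 with h | h
  · obtain ⟨q, hq, hqJ⟩ := exists_rat_lt_of_idealDeviation_lt (by linarith) h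
    refine hJ.mono (fun k hk => ?_) hqJ
    show (q : ℝ) ≤ |x k|
    rcases le_max_iff.1 hk.out with h' | h'
    · linarith [min_le_left |x k| 1]
    · linarith
  · convert hJ.empty_mem
    ext k
    simp only [mem_ofPred_eq, mem_empty_iff_false, iff_false, not_le, max_lt_iff]
    exact ⟨by linarith [min_le_right |x k| 1], hδ⟩

end idealDeviation

lemma aemeasurable_ite {X β : Type*} [MeasurableSpace X] [MeasurableSpace β] {μ : Measure X}
    {p : X → Prop} [DecidablePred p] (hp : NullMeasurableSet {t | p t} μ) (a b : β) :
    AEMeasurable (fun t => if p t then a else b) μ := by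
  classical
  refine ⟨fun t => if t ∈ toMeasurable μ {t | p t} then a else b,
    measurable_const.ite (measurableSet_toMeasurable μ _) measurable_const, ?_⟩
  filter_upwards [eventuallyEq_set.1 hp.toMeasurable_ae_eq] with t ht
  simp only [ht]

lemma aemeasurable_idealDeviation {X : Type*} [MeasurableSpace X] {μ : Measure X}
    (J : Set (Set ℕ)) {x : X → ℕ → ℝ}
    (hx : ∀ q : ℚ, NullMeasurableSet {t | {k | (q : ℝ) ≤ |x t k|} ∈ J} μ) :
    AEMeasurable (fun t => idealDeviation J (x t)) μ := by
  classical
  refine AEMeasurable.iInf fun q => aemeasurable_ite ?_ _ _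
  rw [ofPred_and]
  exact (MeasurableSet.const _).nullMeasurableSet.inter (hx q)

lemma measure_diff_inter_iInter_le {α : Type*} [MeasurableSpace α] (μ : Measure α)
    (S A : Set α) (B : ℕ → Set α) :
    μ (S \ (A ∩ ⋂ n, B n)) ≤ μ (S \ A) + ∑' n, μ (S \ B n) := by
  rw [sdiff_inter, sdiff_iInter]
  exact (measure_union_le _ _).trans (by gcongr; exact measure_iUnion_le _)

theorem RKle.isEgorov {X Y : Type} {I : Set (Set X)} {K : Set (Set Y)} (h : RKle I K)
    (hK : IsEgorov K) : IsEgorov I := by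
  obtain ⟨φ, hφ⟩ := h
  intro f g hf hg hfg η hη
  obtain ⟨M, hMsub, hM, hMη, hfgM⟩ := hK (fun y => f (φ y)) g (fun y => hf (φ y)) hg
    (fun t ht ε hε => (hφ _).1 (hfg t ht ε hε)) η hη
  exact ⟨M, hMsub, hM, hMη, fun ε hε => (hφ _).2 (hfgM ε hε)⟩

section FubiniProduct

variable {I J : Set (Set ℕ)}

lemma rkle_fubiniProd_left (hJ : IsIdeal J) : RKle I (fubiniProd I J) := by
  refine ⟨Prod.fst, fun A => ?_⟩
  suffices {n | {_k : ℕ | n ∈ A} ∉ J} = A by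
    change A ∈ I ↔ {n | {_k : ℕ | n ∈ A} ∉ J} ∈ I
    rw [this]
  ext n
  by_cases hn : n ∈ A <;> simp [hn, hJ.univ_notMem, hJ.empty_mem]

lemma rkle_fubiniProd_right (hI : IsIdeal I) : RKle J (fubiniProd I J) := by
  refine ⟨Prod.snd, fun B => ?_⟩
  by_cases hB : B ∈ J
  · simpa [fubiniProd, hB] using hI.empty_mem
  · simpa [fubiniProd, hB] using hI.univ_notMem

variable (J) (f : ℕ × ℕ → ℝ → ℝ) (g : ℝ → ℝ)

noncomputable def rowDeviation (n : ℕ) (t : ℝ) : ℝ :=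
  idealDeviation J fun k => f (n, k) t - g t

noncomputable def rowExcess (n k : ℕ) (t : ℝ) : ℝ :=
  max (min |f (n, k) t - g t| 1 - rowDeviation J f g n t) 0

variable {J f g}

lemma rowDeviation_nonneg (n : ℕ) (t : ℝ) : 0 ≤ rowDeviation J f g n t :=
  idealDeviation_nonneg _ _

lemma iConvPtwise_rowDeviation (hI : IsIdeal I) (hfg : IConvPtwise (fubiniProd I J) f g) :
    IConvPtwise I (rowDeviation J f g) fun _ => 0 := by
  intro t ht ε hε
  obtain ⟨q, hq, hqε⟩ := exists_rat_btwn hε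
  refine hI.mono ?_ (hfg t ht q hq)
  intro n hn hnq
  have := idealDeviation_le (by exact_mod_cast hq) hnq
  rw [mem_ofPred_eq, sub_zero, abs_of_nonneg (rowDeviation_nonneg n t)] at hn
  exact (hqε.trans_le hn).not_ge this

lemma iConvPtwise_rowExcess (hJ : IsIdeal J) (n : ℕ) :
    IConvPtwise J (rowExcess J f g n) fun _ => 0 := by
  intro t _ δ hδ
  simpa [rowExcess, rowDeviation, abs_of_nonneg] using
    setOf_le_posPart_sub_idealDeviation_mem (x := fun k => f (n, k) t - g t) hJ hδ

lemma iConvUnif_fubiniProd (hI : IsIdeal I) (hJ : IsIdeal J) {M₀ : Set ℝ} {N : ℕ → Set ℝ}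
    (hM₀ : IConvUnif I (rowDeviation J f g) (fun _ => 0) M₀)
    (hN : ∀ n, IConvUnif J (rowExcess J f g n) (fun _ => 0) (N n)) :
    IConvUnif (fubiniProd I J) f g (M₀ ∩ ⋂ n, N n) := by
  intro ε hε
  set ε₁ := min ε 1
  have hε₁ : 0 < ε₁ := lt_min hε one_pos
  refine hI.mono ?_ (hM₀ (ε₁ / 2) (by positivity))
  intro n hn
  by_contra! hw
  simp only [mem_ofPred_eq, not_exists, not_and, not_le] at hw
  refine hn (hJ.mono (fun k => ?_) (hN n (ε₁ / 2) (by positivity)))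
  rintro ⟨t, ⟨htM₀, htN⟩, hk⟩
  refine ⟨t, mem_iInter.1 htN n, ?_⟩
  have hwt := hw t htM₀
  have hmin : ε₁ ≤ min |f (n, k) t - g t| 1 := min_le_min_right 1 hk
  rw [sub_zero, abs_of_nonneg (rowDeviation_nonneg n t)] at hwt
  rw [sub_zero, abs_of_nonneg (le_max_right _ _), rowExcess]
  exact le_max_of_le_left (by linarith)

end FubiniProduct

theorem IsEgorov.fubiniProd {I J : Set (Set ℕ)} (hI : IsIdeal I) (hJ : IsIdeal J)
    (hJa : IsAnalyticIdeal J) (hEI : IsEgorov I) (hEJ : IsEgorov J) :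
    IsEgorov (fubiniProd I J) := by
  intro f g hf hg hfg η hη
  have : IsFiniteMeasure (volume.restrict (Icc (0 : ℝ) 1)) := isFiniteMeasure_restrict.2 (by simp)
  have hw (n : ℕ) : AEMeasurable (rowDeviation J f g n) (volume.restrict (Icc 0 1)) :=
    aemeasurable_idealDeviation J fun _ => nullMeasurableSet_setOf_mem_of_isAnalyticIdeal hJa _
      fun k => nullMeasurableSet_le aemeasurable_const ((hf (n, k)).sub hg).abs
  have hexcess (n k : ℕ) : AEMeasurable (rowExcess J f g n k) (volume.restrict (Icc 0 1)) :=
    ((((hf (n, k)).sub hg).abs.min aemeasurable_const).sub (hw n)).max aemeasurable_const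
  obtain ⟨M₀, hM₀sub, hM₀, hM₀η, hM₀unif⟩ :=
    hEI _ _ hw aemeasurable_const (iConvPtwise_rowDeviation hI hfg) (η / 2) (half_pos hη)
  obtain ⟨δ, hδ, hδη⟩ :=
    ENNReal.exists_pos_sum_of_countable (ENNReal.ofReal_pos.2 (half_pos hη)).ne' ℕ
  choose N hNsub hN hNδ hNunif using fun n =>
    hEJ _ _ (hexcess n) aemeasurable_const (iConvPtwise_rowExcess hJ n) (δ n) (hδ n)
  refine ⟨M₀ ∩ ⋂ n, N n, inter_subset_left.trans hM₀sub, hM₀.inter (.iInter hN), ?_,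
    iConvUnif_fubiniProd hI hJ hM₀unif hNunif⟩
  calc volume (Icc 0 1 \ (M₀ ∩ ⋂ n, N n))
      ≤ volume (Icc 0 1 \ M₀) + ∑' n, volume (Icc 0 1 \ N n) := measure_diff_inter_iInter_le ..
    _ < ENNReal.ofReal (η / 2) + ENNReal.ofReal (η / 2) :=
      ENNReal.add_lt_add hM₀η ((ENNReal.tsum_le_tsum fun n =>
        (hNδ n).le.trans_eq ENNReal.ofReal_coe_nnreal).trans_lt hδη)
    _ = ENNReal.ofReal η := by
      rw [← ENNReal.ofReal_add (by positivity) (by positivity), add_halves]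

/-- For an ideal `I` and an analytic ideal `J` on `ω`: `I ⊗ J` is Egorov iff
both `I` and `J` are Egorov. -/
theorem fubiniProd_egorov_iff (I J : Set (Set ℕ)) (hI : IsIdeal I) (hJ : IsIdeal J)
    (hJa : IsAnalyticIdeal J) :
    IsEgorov (fubiniProd I J) ↔ (IsEgorov I ∧ IsEgorov J) :=
  ⟨fun h => ⟨(rkle_fubiniProd_left hJ).isEgorov h, (rkle_fubiniProd_right hI).isEgorov h⟩,
    fun ⟨hEI, hEJ⟩ => hEI.fubiniProd hI hJ hJa hEJ⟩
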